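/- arXiv:2603.09846 — 3 statements merged into one kernel-verified Lean document; each statement's English description precedes it below -/
import Mathlib

section
/- Let A and S be finite nonempty sets in a metric space, and let S' be a set obtained from S by the following operation: for some subset of pairs (f, ℓ) with f ∈ S and ℓ ∈ A such that ℓ is a point of A nearest to f, replace f by ℓ. Then for every ℓ ∈ A, dist(ℓ, S') ≤ 2·dist(ℓ, S). -/
open Metric

/-- If `S'` is obtained from `S` by replacing some centers `f ∈ S` by a point `ℓ' ∈ A`
nearest (in `A`) to `f`, then every `ℓ ∈ A` satisfies `dist(ℓ, S') ≤ 2 dist(ℓ, S)`. -/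
theorem stmt_3 {X : Type*} [MetricSpace X] (A S S' : Set X) (hS : S.Nonempty)
    (hrepl : ∀ f ∈ S, f ∈ S' ∨
      ∃ ℓ' ∈ A, ℓ' ∈ S' ∧ ∀ a ∈ A, dist f ℓ' ≤ dist f a) :
    ∀ ℓ ∈ A, infDist ℓ S' ≤ 2 * infDist ℓ S := by
  intro ℓ hℓ
  have key : ∀ f ∈ S, infDist ℓ S' ≤ 2 * dist ℓ f := by
    intro f hf
    rcases hrepl f hf with h | ⟨ℓ', hℓ'A, hℓ'S', hnear⟩
    · calc infDist ℓ S' ≤ dist ℓ f := infDist_le_dist_of_mem h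
        _ ≤ 2 * dist ℓ f := by linarith [dist_nonneg (x := ℓ) (y := f)]
    · calc infDist ℓ S' ≤ dist ℓ ℓ' := infDist_le_dist_of_mem hℓ'S'
        _ ≤ dist ℓ f + dist f ℓ' := dist_triangle _ _ _
        _ ≤ dist ℓ f + dist f ℓ := by linarith [hnear ℓ hℓ]
        _ = 2 * dist ℓ f := by rw [dist_comm f ℓ]; ring
  refine le_of_forall_pos_le_add fun ε hε => ?_
  obtain ⟨f, hf, hlt⟩ := (infDist_lt_iff hS).mp
    (lt_add_of_pos_right (infDist ℓ S) (half_pos hε))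
  calc infDist ℓ S' ≤ 2 * dist ℓ f := key f hf
    _ ≤ 2 * (infDist ℓ S + ε / 2) := by linarith
    _ ≤ 2 * infDist ℓ S + ε := by linarith
end

section
/- Let r > 0, ε ∈ (0,1), d ≥ 1, and τ = log₂(d) + log₂(1/ε). Suppose L is an integer-valued random variable (the cut level of a ball of radius r) satisfying P[L = i] ≤ d·r/2^i for every integer i. Define β = ε·2^L·r + ε²·2^{2L} if L ≤ log₂(r) + τ, and β = 0 otherwise. Then E[β] ≤ C·d²·log₂(2/ε)·ε·r² for some universal constant C. -/
open MeasureTheory Real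

lemma geom_Icc (a b : ℤ) : ∑ i ∈ Finset.Icc a b, (2:ℝ)^i ≤ 2^(b+1) := by
  rcases lt_or_ge b a with h | h
  · rw [Finset.Icc_eq_empty (not_le.mpr h)]
    simp only [Finset.sum_empty]
    positivity
  · refine Int.le_induction (motive := fun b _ => ∑ i ∈ Finset.Icc a b, (2:ℝ)^i ≤ 2^(b+1)) ?_ ?_ b h
    · show ∑ i ∈ Finset.Icc a a, (2:ℝ)^i ≤ 2^(a+1)
      rw [Finset.Icc_self, Finset.sum_singleton, zpow_add₀ (two_ne_zero)]
      have := zpow_pos (by norm_num : (0:ℝ) < 2) a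
      nlinarith
    · intro n hn ih
      show ∑ i ∈ Finset.Icc a (n+1), (2:ℝ)^i ≤ 2^(n+1+1)
      have hins : Finset.Icc a (n+1) = insert (n+1) (Finset.Icc a n) := by
        ext x; simp only [Finset.mem_Icc, Finset.mem_insert]; omega
      rw [hins, Finset.sum_insert (by simp)]
      have h2 : (2:ℝ)^(n+1+1) = 2^(n+1) + 2^(n+1) := by
        rw [zpow_add₀ (two_ne_zero : (2:ℝ) ≠ 0) (n+1) 1]; ring
      rw [h2]
      exact add_le_add le_rfl ih

lemma logb_le_two_mul (d : ℝ) (hd : 1 ≤ d) : Real.logb 2 d ≤ 2 * d := by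
  have h1 : Real.log d ≤ d - 1 := Real.log_le_sub_one_of_pos (by linarith)
  have h2 : (0.6931471803:ℝ) < Real.log 2 := Real.log_two_gt_d9
  rw [Real.logb, div_le_iff₀ (by linarith)]
  nlinarith

/-- Budget-expectation bound for k-means: if the cut level `L` of a ball of radius `r`
satisfies `P[L = i] ≤ d r / 2^i`, then the expected truncated detour
`ε 2^L r + ε² 2^{2L}` (truncated at level `log₂ r + log₂ d + log₂(1/ε)`)
is at most `C d² log₂(2/ε) ε r²` for a universal constant `C`. -/
theorem stmt_4 :
    ∃ C : ℝ, 0 < C ∧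
      ∀ (Ω : Type) (_ : MeasurableSpace Ω) (μ : Measure Ω),
        IsProbabilityMeasure μ →
        ∀ (L : Ω → ℤ) (r ε d : ℝ), 0 < r → ε ∈ Set.Ioo (0:ℝ) 1 → 1 ≤ d →
        (∀ i : ℤ, μ {ω | L ω = i} ≤ ENNReal.ofReal (d * r / 2 ^ i)) →
        (∫ ω, (if (L ω : ℝ) ≤ Real.logb 2 r + Real.logb 2 d + Real.logb 2 (1/ε)
            then ε * 2 ^ (L ω) * r + ε ^ 2 * 2 ^ (2 * L ω) else 0) ∂μ)
          ≤ C * d ^ 2 * Real.logb 2 (2/ε) * ε * r ^ 2 := by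
  refine ⟨8, by norm_num, ?_⟩
  intro Ω mΩ μ hμ L r ε d hr hε hd hP
  obtain ⟨hε0, hε1⟩ := hε
  have hd0 : (0:ℝ) < d := by linarith
  set u := Real.logb 2 (1/ε) with hu_def
  have hu : 0 ≤ u := Real.logb_nonneg one_lt_two (by rw [le_div_iff₀ hε0]; linarith)
  have hlog2ε : Real.logb 2 (2/ε) = 1 + u := by
    rw [hu_def, show (2:ℝ)/ε = 2 * (1/ε) by ring,
      Real.logb_mul two_ne_zero (by positivity)]
    simp [Real.logb_self_eq_one]
  set T := Real.logb 2 r + Real.logb 2 d + u with hT_def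
  have h2powT : (2:ℝ) ^ T = r * d / ε := by
    rw [hT_def, Real.rpow_add two_pos, Real.rpow_add two_pos,
      Real.rpow_logb two_pos (by norm_num) hr,
      Real.rpow_logb two_pos (by norm_num) hd0, hu_def,
      Real.rpow_logb two_pos (by norm_num) (by positivity : (0:ℝ) < 1/ε)]
    field_simp
  set a : ℤ := ⌊Real.logb 2 r⌋ + 1 with ha_def
  set b : ℤ := ⌊T⌋ with hb_def
  set S : Finset ℤ := Finset.Icc a b with hS_def
  set f : ℤ → ℝ := fun i => ε * 2 ^ i * r + ε ^ 2 * 2 ^ (2*i) with hf_def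
  have hf0 : ∀ i, 0 ≤ f i := by
    intro i
    have h1 : (0:ℝ) < 2 ^ i := zpow_pos two_pos i
    have h2 : (0:ℝ) < 2 ^ (2*i) := zpow_pos two_pos (2*i)
    rw [hf_def]
    have := sq_nonneg ε
    positivity
  set B : ℤ → Set Ω := fun i => toMeasurable μ {ω | L ω = i} with hB_def
  set g : Ω → ℝ := fun ω =>
    if (L ω : ℝ) ≤ T then ε * 2 ^ (L ω) * r + ε ^ 2 * 2 ^ (2 * L ω) else 0 with hg_def
  have hg0 : ∀ ω, 0 ≤ g ω := by
    intro ω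
    rw [hg_def]
    dsimp only
    split
    · have h1 : (0:ℝ) < 2 ^ (L ω) := zpow_pos two_pos _
      have h2 : (0:ℝ) < 2 ^ (2 * L ω) := zpow_pos two_pos _
      positivity
    · exact le_refl 0
  -- key zpow bounds
  have hzr : ∀ i : ℤ, ((i:ℝ) ≤ Real.logb 2 r) → (2:ℝ)^i ≤ r := by
    intro i hi
    have h := Real.rpow_le_rpow_of_exponent_le one_le_two hi
    rwa [Real.rpow_logb two_pos (by norm_num) hr, Real.rpow_intCast] at h
  have h2b : (2:ℝ)^b ≤ r * d / ε := by
    have h1 : ((b:ℝ)) ≤ T := Int.floor_le T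
    have h := Real.rpow_le_rpow_of_exponent_le one_le_two h1
    rwa [h2powT, Real.rpow_intCast] at h
  -- pointwise bound
  have hpt : ∀ ω, ENNReal.ofReal (g ω) ≤
      ENNReal.ofReal (2*ε*r^2) + ∑ i ∈ S, (B i).indicator (fun _ => ENNReal.ofReal (f i)) ω := by
    intro ω
    by_cases hif : (L ω : ℝ) ≤ T
    · by_cases hlow : (L ω : ℝ) ≤ Real.logb 2 r
      · have h1 : (2:ℝ)^(L ω) ≤ r := hzr _ hlow
        have h2 : (0:ℝ) < 2^(L ω) := zpow_pos two_pos _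
        have h3 : g ω ≤ 2*ε*r^2 := by
          rw [hg_def]
          dsimp only
          rw [if_pos hif]
          have h4 : (2:ℝ)^(2*L ω) = 2^(L ω) * 2^(L ω) := by
            rw [two_mul, zpow_add₀ (two_ne_zero : (2:ℝ) ≠ 0)]
          rw [h4]
          have hx2 : (2:ℝ)^(L ω)*(2:ℝ)^(L ω) ≤ r*r := mul_le_mul h1 h1 h2.le hr.le
          have hε2 : ε^2 ≤ ε := by nlinarith
          have hb1 : ε * 2^(L ω) * r ≤ ε * r * r :=
            mul_le_mul_of_nonneg_right (mul_le_mul_of_nonneg_left h1 hε0.le) hr.le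
          have hb2 : ε^2 * ((2:ℝ)^(L ω)*(2:ℝ)^(L ω)) ≤ ε^2 * (r*r) :=
            mul_le_mul_of_nonneg_left hx2 (sq_nonneg ε)
          have hb3 : ε^2 * (r*r) ≤ ε * (r*r) :=
            mul_le_mul_of_nonneg_right hε2 (mul_nonneg hr.le hr.le)
          nlinarith
        exact le_trans (ENNReal.ofReal_le_ofReal h3) (self_le_add_right _ _)
      · have ha : a ≤ L ω := by
          have h5 : ⌊Real.logb 2 r⌋ < L ω := Int.floor_lt.mpr (lt_of_not_ge hlow)
          omega
        have hb : L ω ≤ b := Int.le_floor.mpr hif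
        have hmem : L ω ∈ S := Finset.mem_Icc.mpr ⟨ha, hb⟩
        have hωB : ω ∈ B (L ω) := subset_toMeasurable μ _ (by simp)
        have heq : ENNReal.ofReal (g ω)
            = (B (L ω)).indicator (fun _ => ENNReal.ofReal (f (L ω))) ω := by
          rw [Set.indicator_of_mem hωB, hg_def, hf_def]
          dsimp only
          rw [if_pos hif]
        rw [heq]
        refine le_trans (Finset.single_le_sum
          (f := fun i => (B i).indicator (fun _ => ENNReal.ofReal (f i)) ω)
          (fun i _ => zero_le) hmem) ?_
        exact self_le_add_left _ _
    · rw [hg_def]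
      dsimp only
      rw [if_neg hif, ENNReal.ofReal_zero]
      exact zero_le
  -- real-side bound
  have hcard : (S.card : ℝ) ≤ Real.logb 2 d + u + 1 := by
    have hlogd0 : 0 ≤ Real.logb 2 d := Real.logb_nonneg one_lt_two hd
    rw [hS_def, Int.card_Icc]
    rcases le_or_gt (b + 1 - a) 0 with h | h
    · rw [Int.toNat_of_nonpos h]
      push_cast
      linarith
    · have h1 : ((b:ℝ)) ≤ T := Int.floor_le T
      have h2 : Real.logb 2 r < (a:ℝ) := by
        rw [ha_def]
        push_cast
        exact Int.lt_floor_add_one _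
      rw [hT_def] at h1
      have h3 : ((b + 1 - a).toNat : ℤ) = b + 1 - a := Int.toNat_of_nonneg h.le
      have h4 : ((b + 1 - a).toNat : ℝ) = (b:ℝ) + 1 - (a:ℝ) := by exact_mod_cast congrArg (Int.cast : ℤ → ℝ) h3
      rw [h4]
      linarith
  have hSsum : ∑ i ∈ S, (2:ℝ)^i ≤ 2 * (r * d / ε) := by
    refine le_trans (geom_Icc a b) ?_
    rw [zpow_add₀ (two_ne_zero : (2:ℝ) ≠ 0) b 1]
    nlinarith [zpow_pos (by norm_num : (0:ℝ) < 2) b]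
  have hsum_eq : ∑ i ∈ S, f i * (d * r / 2^i)
      = (S.card : ℝ) * (ε*d*r^2) + ε^2*d*r * ∑ i ∈ S, (2:ℝ)^i := by
    have hterm : ∀ i ∈ S, f i * (d * r / 2^i) = ε*d*r^2 + ε^2*d*r*2^i := by
      intro i _
      have h2 : (0:ℝ) < 2^i := zpow_pos two_pos i
      have h4 : (2:ℝ)^(2*i) = 2^i * 2^i := by
        rw [two_mul, zpow_add₀ (two_ne_zero : (2:ℝ) ≠ 0)]
      rw [hf_def]
      dsimp only
      rw [h4]
      field_simp
    rw [Finset.sum_congr rfl hterm, Finset.sum_add_distrib, Finset.sum_const,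
      nsmul_eq_mul, ← Finset.mul_sum]
  have hld : Real.logb 2 d ≤ 2*d := logb_le_two_mul d hd
  have hK : 2*ε*r^2 + ∑ i ∈ S, f i * (d * r / 2^i) ≤ 8*d^2*(1+u)*ε*r^2 := by
    rw [hsum_eq]
    have hc1 : (S.card : ℝ) * (ε*d*r^2) ≤ (Real.logb 2 d + u + 1) * (ε*d*r^2) := by
      apply mul_le_mul_of_nonneg_right hcard
      positivity
    have hc2 : ε^2*d*r * ∑ i ∈ S, (2:ℝ)^i ≤ ε^2*d*r * (2 * (r * d / ε)) := by
      apply mul_le_mul_of_nonneg_left hSsum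
      positivity
    have hc3 : ε^2*d*r * (2 * (r * d / ε)) = 2*ε*d^2*r^2 := by
      field_simp
    rw [hc3] at hc2
    nlinarith [mul_pos hε0 (mul_pos hd0 (pow_pos hr 2)), mul_pos hε0 (pow_pos hr 2),
      mul_nonneg hu (mul_pos hε0 (mul_pos hd0 (pow_pos hr 2))).le,
      mul_nonneg hu (mul_pos hε0 (pow_pos hr 2)).le, sq_nonneg (d-1),
      mul_nonneg hu (mul_pos (mul_pos hε0 (mul_pos hd0 hd0)) (pow_pos hr 2)).le]
  have hRHS : (8:ℝ) * d ^ 2 * Real.logb 2 (2/ε) * ε * r ^ 2 = 8*d^2*(1+u)*ε*r^2 := by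
    rw [hlog2ε]
  rw [hRHS]
  show (∫ ω, g ω ∂μ) ≤ 8*d^2*(1+u)*ε*r^2
  have hRHS0 : 0 ≤ 8*d^2*(1+u)*ε*r^2 := by positivity
  by_cases hInt : Integrable g μ
  · rw [integral_eq_lintegral_of_nonneg_ae (ae_of_all μ hg0) hInt.aestronglyMeasurable]
    have hle1 : ∫⁻ ω, ENNReal.ofReal (g ω) ∂μ ≤ ENNReal.ofReal (8*d^2*(1+u)*ε*r^2) := by
      calc ∫⁻ ω, ENNReal.ofReal (g ω) ∂μ
          ≤ ∫⁻ ω, (ENNReal.ofReal (2*ε*r^2)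
              + ∑ i ∈ S, (B i).indicator (fun _ => ENNReal.ofReal (f i)) ω) ∂μ :=
            lintegral_mono hpt
        _ = ENNReal.ofReal (2*ε*r^2) * μ Set.univ
              + ∑ i ∈ S, ENNReal.ofReal (f i) * μ (B i) := by
            rw [lintegral_add_left measurable_const, lintegral_const,
              lintegral_finset_sum _ (fun i _ =>
                (measurable_const.indicator (measurableSet_toMeasurable μ _)))]
            congr 1
            exact Finset.sum_congr rfl (fun i _ =>
              lintegral_indicator_const (measurableSet_toMeasurable μ _) _)
        _ ≤ ENNReal.ofReal (2*ε*r^2) * 1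
              + ∑ i ∈ S, ENNReal.ofReal (f i * (d * r / 2^i)) := by
            refine add_le_add (by rw [measure_univ]) (Finset.sum_le_sum (fun i _ => ?_))
            rw [hB_def]
            dsimp only
            rw [measure_toMeasurable, ENNReal.ofReal_mul (hf0 i)]
            exact mul_le_mul_right (hP i) _
        _ = ENNReal.ofReal (2*ε*r^2 + ∑ i ∈ S, f i * (d * r / 2^i)) := by
            rw [mul_one, ← ENNReal.ofReal_sum_of_nonneg (fun i _ => ?_), ← ENNReal.ofReal_add]
            · positivity
            · positivity
            · have h2 : (0:ℝ) < 2^i := zpow_pos two_pos i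
              have := hf0 i
              positivity
        _ ≤ ENNReal.ofReal (8*d^2*(1+u)*ε*r^2) := ENNReal.ofReal_le_ofReal hK
    calc (∫⁻ ω, ENNReal.ofReal (g ω) ∂μ).toReal
        ≤ (ENNReal.ofReal (8*d^2*(1+u)*ε*r^2)).toReal :=
          ENNReal.toReal_mono ENNReal.ofReal_ne_top hle1
      _ = 8*d^2*(1+u)*ε*r^2 := ENNReal.toReal_ofReal hRHS0
  · rw [integral_undef hInt]
    exact hRHS0
end

section
/- In ℝ^d with squared Euclidean cost: if every client point (edge midpoint) is at squared distance exactly 1 from its two nearest candidate centers when its edge is in E₁, squared distance exactly 2 when its edge is in E₂, and squared distance at least 4 from every other candidate center, then any set of centers covering (i.e., containing an endpoint of) every edge yields a clustering cost of exactly |E₁| + 2·|E₂|, and any uncovered edge contributes cost at least 4, i.e., an additive penalty of at least 2 over its covered cost. -/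
open Finset

/-- k-means instance from the embedded graph: clients are edge midpoints at squared
distance exactly 1 (edges in `E₁`) or exactly 2 (edges in `E₂`) from each of their two
endpoint-centers, and at squared distance at least 4 from every other candidate center.
Then any covering set of centers has clustering cost exactly `|E₁| + 2|E₂|`, and any
uncovered edge contributes cost at least 4 (an additive penalty of at least 2). -/
theorem stmt_14 {ι C : Type*} [Fintype ι] [DecidableEq ι] (dim : ℕ)
    (pt : ι → EuclideanSpace ℝ (Fin dim)) (ctr : C → EuclideanSpace ℝ (Fin dim))
    (endpoints : ι → C × C)
    (E1 E2 : Finset ι) (hpart : E1 ∪ E2 = Finset.univ) (hdisj : Disjoint E1 E2)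
    (h1 : ∀ e ∈ E1, dist (pt e) (ctr (endpoints e).1) ^ 2 = 1 ∧
      dist (pt e) (ctr (endpoints e).2) ^ 2 = 1)
    (h2 : ∀ e ∈ E2, dist (pt e) (ctr (endpoints e).1) ^ 2 = 2 ∧
      dist (pt e) (ctr (endpoints e).2) ^ 2 = 2)
    (hfar : ∀ e : ι, ∀ c : C, c ≠ (endpoints e).1 → c ≠ (endpoints e).2 →
      4 ≤ dist (pt e) (ctr c) ^ 2)
    (S : Finset C) (hS : S.Nonempty) :
    ((∀ e : ι, (endpoints e).1 ∈ S ∨ (endpoints e).2 ∈ S) →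
      (∑ e : ι, S.inf' hS fun c => dist (pt e) (ctr c) ^ 2)
        = E1.card + 2 * E2.card) ∧
    (∀ e : ι, (endpoints e).1 ∉ S → (endpoints e).2 ∉ S →
      4 ≤ S.inf' hS fun c => dist (pt e) (ctr c) ^ 2) := by
  constructor
  · intro hcov
    have key : ∀ e : ι, (S.inf' hS fun c => dist (pt e) (ctr c) ^ 2)
        = if e ∈ E1 then (1:ℝ) else 2 := by
      intro e
      have he : e ∈ E1 ∨ e ∈ E2 := by
        have : e ∈ E1 ∪ E2 := by rw [hpart]; exact mem_univ e
        exact mem_union.mp this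
      have hval : ∀ c : C, c = (endpoints e).1 ∨ c = (endpoints e).2 →
          dist (pt e) (ctr c) ^ 2 = if e ∈ E1 then (1:ℝ) else 2 := by
        intro c hc
        rcases he with h | h
        · rw [if_pos h]
          rcases hc with rfl | rfl
          · exact (h1 e h).1
          · exact (h1 e h).2
        · rw [if_neg (fun h' => (Finset.disjoint_left.mp hdisj h' h).elim)]
          rcases hc with rfl | rfl
          · exact (h2 e h).1
          · exact (h2 e h).2
      have hle2 : (if e ∈ E1 then (1:ℝ) else 2) ≤ 2 := by split <;> norm_num
      apply le_antisymm
      · rcases hcov e with h | h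
        · calc S.inf' hS (fun c => dist (pt e) (ctr c) ^ 2) ≤ _ := inf'_le _ h
            _ = _ := hval _ (Or.inl rfl)
        · calc S.inf' hS (fun c => dist (pt e) (ctr c) ^ 2) ≤ _ := inf'_le _ h
            _ = _ := hval _ (Or.inr rfl)
      · apply le_inf'
        intro c _
        by_cases hc : c = (endpoints e).1 ∨ c = (endpoints e).2
        · exact (hval c hc).ge
        · push_neg at hc
          exact le_trans (le_trans hle2 (by norm_num)) (hfar e c hc.1 hc.2)
    have hsplit : (Finset.univ : Finset ι) = E1 ∪ E2 := hpart.symm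
    calc (∑ e : ι, S.inf' hS fun c => dist (pt e) (ctr c) ^ 2)
        = ∑ e : ι, (if e ∈ E1 then (1:ℝ) else 2) := by
          exact Finset.sum_congr rfl fun e _ => key e
      _ = ∑ e ∈ E1 ∪ E2, (if e ∈ E1 then (1:ℝ) else 2) := by rw [hpart]
      _ = (∑ e ∈ E1, (if e ∈ E1 then (1:ℝ) else 2))
          + ∑ e ∈ E2, (if e ∈ E1 then (1:ℝ) else 2) := sum_union hdisj
      _ = E1.card + 2 * E2.card := by
          rw [Finset.sum_congr rfl (fun e he => if_pos he),
            Finset.sum_congr rfl (fun e he => if_neg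
              (fun h' => (Finset.disjoint_left.mp hdisj h' he).elim))]
          simp [mul_comm]
  · intro e h1' h2'
    apply le_inf'
    intro c hc
    exact hfar e c (fun h => h1' (h ▸ hc)) (fun h => h2' (h ▸ hc))
end
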